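/- arXiv:2009.14680 — 2 statements merged into one kernel-verified Lean document; each statement's English description precedes it below -/
import Mathlib

section
/- Suppose in addition that G is a topological group acting continuously on Y, that Y is first countable, and that the quotient space Y/~ is first countable. Then for every p ∈ P and every G-invariant open set U ⊆ Y containing p, there exists a ~-saturated open set V with p ∈ V ⊆ U (a set is ~-saturated if it is a union of ~-equivalence classes). -/
/-- The relation on `Y`: the closures of the `G`-orbits of the two points intersect
(abstracting S-equivalence of semistable Higgs bundles). -/
def orbitClosureRel (G : Type*) [Group G] (Y : Type*) [TopologicalSpace Y]
    [MulAction G Y] (x y : Y) : Prop :=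
  (closure (MulAction.orbit G x) ∩ closure (MulAction.orbit G y)).Nonempty

/-!
The saturated neighbourhood is `r⁻¹' U`. It is open because `r` is continuous, it contains `p`
because `r p ∈ G • p ⊆ U`, and it lies in `U` because `r y ∈ U` lies in the closure of `G • y`,
so the open invariant set `U` meets `G • y`. It is saturated because `x ~ y` forces `r x` and
`r y` into one orbit: both are orbit-equivalent to `r z` for a common point `z` of the two
orbit closures, the orbit closure of `z` (and with it `r z`) lying in each of them.
-/

open MulAction

theorem closure_orbit_subset_of_mem_closure_orbit {M Y : Type*} [Monoid M] [MulAction M Y]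
    [TopologicalSpace Y] [ContinuousConstSMul M Y] {x z : Y}
    (hz : z ∈ closure (orbit M x)) : closure (orbit M z) ⊆ closure (orbit M x) :=
  closure_minimal
    (by
      rintro _ ⟨c, rfl⟩
      exact smul_closure_orbit_subset c x (Set.smul_mem_smul_set hz))
    isClosed_closure

section

variable {G Y : Type*} [Group G] [MulAction G Y] [TopologicalSpace Y]

theorem mem_of_mem_closure_orbit_of_isOpen {U : Set Y} (hU : IsOpen U)
    (hUinv : ∀ g : G, ∀ u ∈ U, g • u ∈ U) {x z : Y} (hz : z ∈ closure (orbit G x))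
    (hzU : z ∈ U) : x ∈ U := by
  obtain ⟨_, hgxU, g, rfl⟩ := mem_closure_iff.mp hz U hU hzU
  simpa using hUinv g⁻¹ _ hgxU

theorem exists_smul_eq_of_orbitClosureRel [ContinuousConstSMul G Y] {P : Set Y} {r : Y → Y}
    (ha : ∀ y : Y, r y ∈ closure (orbit G y)) (hb : ∀ y : Y, r y ∈ P)
    (hc : ∀ y : Y, ∀ p ∈ P, ∀ q ∈ P, p ∈ closure (orbit G y) →
      q ∈ closure (orbit G y) → ∃ g : G, g • p = q)
    {x y : Y} (hxy : orbitClosureRel G Y x y) : ∃ g : G, g • r x = r y := by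
  obtain ⟨z, hzx, hzy⟩ := hxy
  have hrzx := closure_orbit_subset_of_mem_closure_orbit hzx (ha z)
  have hrzy := closure_orbit_subset_of_mem_closure_orbit hzy (ha z)
  obtain ⟨g, hg⟩ := hc x (r x) (hb x) (r z) (hb z) (ha x) hrzx
  obtain ⟨g', hg'⟩ := hc y (r y) (hb y) (r z) (hb z) (ha y) hrzy
  exact ⟨g'⁻¹ * g, by rw [mul_smul, hg, ← hg', inv_smul_smul]⟩

end

theorem invariant_nbhd_contains_saturated_nbhd_general
    {Y : Type*} [TopologicalSpace Y]
    {G : Type*} [Group G] [TopologicalSpace G]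
    [MulAction G Y] [ContinuousSMul G Y]
    (P : Set Y) (r : Y → Y)
    (ha : ∀ y : Y, r y ∈ closure (MulAction.orbit G y))
    (hb : ∀ y : Y, r y ∈ P)
    (hc : ∀ y : Y, ∀ p ∈ P, ∀ q ∈ P, p ∈ closure (MulAction.orbit G y) →
      q ∈ closure (MulAction.orbit G y) → ∃ g : G, g • p = q)
    (hr : Continuous r)
    (hrP : ∀ p ∈ P, r p ∈ MulAction.orbit G p)
    (p : Y) (hp : p ∈ P)
    (U : Set Y) (hUopen : IsOpen U) (hUinv : ∀ g : G, ∀ u ∈ U, g • u ∈ U)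
    (hpU : p ∈ U) :
    ∃ V : Set Y, IsOpen V ∧ p ∈ V ∧ V ⊆ U ∧
      ∀ x ∈ V, ∀ y : Y, orbitClosureRel G Y x y → y ∈ V := by
  refine ⟨r ⁻¹' U, hUopen.preimage hr, ?_, ?_, ?_⟩
  · obtain ⟨g, hg⟩ := hrP p hp
    simpa [Set.mem_preimage, ← hg] using hUinv g p hpU
  · exact fun y hy => mem_of_mem_closure_orbit_of_isOpen hUopen hUinv (ha y) hy
  · intro x hx y hxy
    obtain ⟨g, hg⟩ := exists_smul_eq_of_orbitClosureRel ha hb hc hxy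
    rw [Set.mem_preimage, ← hg]
    exact hUinv g (r x) hx

/-- In the setting of the retraction `r : Y → Y` onto `P ⊆ Y`
(hypotheses (a)–(d)), suppose moreover that `G` is a topological group acting
continuously on `Y`, that `Y` is first countable, and that the quotient `Y/~` by the
relation `~` ("orbit closures intersect") is first countable. Then every `G`-invariant
open set `U` containing a point `p ∈ P` contains a `~`-saturated open set `V` with
`p ∈ V ⊆ U`. -/
theorem invariant_nbhd_contains_saturated_nbhd
    {Y : Type*} [TopologicalSpace Y] [FirstCountableTopology Y]
    {G : Type*} [Group G] [TopologicalSpace G] [IsTopologicalGroup G]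
    [MulAction G Y] [ContinuousSMul G Y]
    (P : Set Y) (r : Y → Y)
    (ha : ∀ y : Y, r y ∈ closure (MulAction.orbit G y))
    (hb : ∀ y : Y, r y ∈ P)
    (hc : ∀ y : Y, ∀ p ∈ P, ∀ q ∈ P, p ∈ closure (MulAction.orbit G y) →
      q ∈ closure (MulAction.orbit G y) → ∃ g : G, g • p = q)
    (hPinv : ∀ g : G, ∀ p ∈ P, g • p ∈ P)
    (hr : Continuous r)
    (hrP : ∀ p ∈ P, r p ∈ MulAction.orbit G p)
    (hQ : FirstCountableTopology (Quot (orbitClosureRel G Y)))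
    (p : Y) (hp : p ∈ P)
    (U : Set Y) (hUopen : IsOpen U) (hUinv : ∀ g : G, ∀ u ∈ U, g • u ∈ U)
    (hpU : p ∈ U) :
    ∃ V : Set Y, IsOpen V ∧ p ∈ V ∧ V ⊆ U ∧
      ∀ x ∈ V, ∀ y : Y, orbitClosureRel G Y x y → y ∈ V :=
  invariant_nbhd_contains_saturated_nbhd_general P r ha hb hc hr hrP p hp U hUopen hUinv hpU
end

section
/- The orbit space W/ℂ*, with the quotient topology, is compact. -/
/-!
The level set `f̃⁻¹(c)` is compact, and it lies in `W` because `f̃ = f > c` on `h⁻¹(0) × {0}`.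
It meets every orbit in `W`: along the positive real ray `t ↦ t • p` the point `(h, z)(t • p)`
tends to `0` as `t → 0`, so by properness of `(h, z)` eventually `f̃(t • p) > c`; as `t → ∞` the
point `(h, z)(t • p)` goes to infinity since `p ∈ W`, so the ray leaves every compact set, in
particular the compact set `f̃⁻¹[c, 0]`, and eventually `f̃(t • p) < c`. The intermediate value
theorem gives a point of the ray in `f̃⁻¹(c)`, hence `W/ℂˣ` is the continuous image of a compact
set.
-/

/-- The `ℂˣ`-invariant open set `W = (X × ℂ) \ (h⁻¹(0) × {0})`, for the diagonal action
`t • (x, z) = (t • x, t z)`; invariance follows from the homogeneity of `h`. -/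
def symplecticCutSubMulAction {X : Type*} [MulAction ℂˣ X] {n : ℕ}
    (h : X → Fin n → ℂ) (d : Fin n → ℕ)
    (hhom : ∀ (t : ℂˣ) (x : X) (j : Fin n), h (t • x) j = (t : ℂ) ^ d j * h x j) :
    SubMulAction ℂˣ (X × ℂ) where
  carrier := ((h ⁻¹' {0}) ×ˢ ({0} : Set ℂ))ᶜ
  smul_mem' := by
    intro t p hp hmem
    apply hp
    rw [Set.mem_prod] at hmem
    obtain ⟨h1, h2⟩ := hmem
    rw [Set.mem_prod]
    constructor
    · simp only [Set.mem_preimage, Set.mem_singleton_iff] at h1 ⊢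
      funext j
      have hj := hhom t p.1 j
      have hfst : (t • p).1 = t • p.1 := rfl
      rw [hfst] at h1
      rw [h1] at hj
      simp only [Pi.zero_apply] at hj
      rcases mul_eq_zero.mp hj.symm with h3 | h4
      · exact absurd h3 (pow_ne_zero _ t.ne_zero)
      · exact h4
    · simp only [Set.mem_singleton_iff] at h2 ⊢
      have hsnd : (t • p).2 = (t : ℂ) * p.2 := rfl
      rw [hsnd] at h2
      rcases mul_eq_zero.mp h2 with h3 | h4
      · exact absurd h3 t.ne_zero
      · exact h4

open Filter Topology

theorem MulAction.compactSpace_quotient_orbitRel_of_isCompact {G Y : Type*} [Group G]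
    [MulAction G Y] [TopologicalSpace Y] {K : Set Y} (hK : IsCompact K)
    (hmeet : ∀ y : Y, ∃ g : G, g • y ∈ K) : CompactSpace (Quotient (orbitRel G Y)) := by
  have himage : Quotient.mk (orbitRel G Y) '' K = Set.univ := by
    refine Set.eq_univ_of_forall fun q => ?_
    obtain ⟨y, rfl⟩ := Quotient.exists_rep q
    obtain ⟨g, hg⟩ := hmeet y
    exact ⟨g • y, hg, Quotient.sound ⟨g, rfl⟩⟩
  exact ⟨himage ▸ hK.image continuous_quotient_mk'⟩

theorem SubMulAction.compactSpace_quotient_orbitRel_of_isCompact {G Y : Type*} [Group G]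
    [MulAction G Y] [TopologicalSpace Y] (W : SubMulAction G Y) {K : Set Y} (hK : IsCompact K)
    (hKW : K ⊆ W) (hmeet : ∀ y ∈ W, ∃ g : G, g • y ∈ K) :
    CompactSpace (Quotient (MulAction.orbitRel G W)) :=
  MulAction.compactSpace_quotient_orbitRel_of_isCompact
    (Topology.IsInducing.subtypeVal.isCompact_preimage' hK (by simpa using hKW))
    fun y => hmeet y y.2

theorem IsProperMap.eventually_nhds_forall_fiber_lt {X Y α : Type*} [TopologicalSpace X]
    [TopologicalSpace Y] [LinearOrder α] [TopologicalSpace α] [OrderClosedTopology α]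
    {H : X → Y} (hH : IsProperMap H) {φ : X → α} (hφ : Continuous φ) {c : α} {y : Y}
    (hy : ∀ x, H x = y → c < φ x) : ∀ᶠ y' in 𝓝 y, ∀ x, H x = y' → c < φ x := by
  have hclosed : IsClosed (H '' {x | φ x ≤ c}) :=
    hH.isClosedMap _ (isClosed_le hφ continuous_const)
  have hy_notMem : y ∉ H '' {x | φ x ≤ c} := by
    rintro ⟨x, hx, rfl⟩
    exact (hy x rfl).not_ge hx
  filter_upwards [hclosed.isOpen_compl.mem_nhds hy_notMem] with y' hy' x hx
  exact lt_of_not_ge fun hle => hy' ⟨x, hle, hx⟩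

noncomputable def expUnit (s : ℝ) : ℂˣ :=
  Units.mk0 (Real.exp s) (Complex.ofReal_ne_zero.2 (Real.exp_pos s).ne')

theorem coe_expUnit (s : ℝ) : (expUnit s : ℂ) = Real.exp s := rfl

theorem continuous_expUnit : Continuous expUnit := by
  refine Units.continuous_iff.2 ⟨by fun_prop, ?_⟩
  simp only [Units.val_inv_eq_inv_val, coe_expUnit]
  exact (by fun_prop : Continuous fun s : ℝ => (Real.exp s : ℂ)).inv₀ fun s =>
    Complex.ofReal_ne_zero.2 (Real.exp_pos s).ne'

theorem tendsto_expUnit_pow_mul_atBot {k : ℕ} (hk : k ≠ 0) (w : ℂ) :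
    Tendsto (fun s => (expUnit s : ℂ) ^ k * w) atBot (𝓝 0) := by
  have hcont : Continuous fun t : ℝ => (t : ℂ) ^ k * w := by fun_prop
  have hlim := (hcont.tendsto 0).comp Real.tendsto_exp_atBot
  rwa [Complex.ofReal_zero, zero_pow hk, zero_mul] at hlim

theorem tendsto_expUnit_pow_mul_atTop {k : ℕ} (hk : k ≠ 0) {w : ℂ} (hw : w ≠ 0) :
    Tendsto (fun s => (expUnit s : ℂ) ^ k * w) atTop (cocompact ℂ) := by
  rw [← Metric.cobounded_eq_cocompact, ← comap_norm_atTop, tendsto_comap_iff]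
  have hnorm : ∀ s, ‖(expUnit s : ℂ) ^ k * w‖ = Real.exp s ^ k * ‖w‖ := fun s => by
    rw [norm_mul, norm_pow, coe_expUnit, Complex.norm_real,
      Real.norm_of_nonneg (Real.exp_pos s).le]
  simp only [Function.comp_def, hnorm]
  exact ((tendsto_pow_atTop hk).comp Real.tendsto_exp_atTop).atTop_mul_const (norm_pos_iff.2 hw)

section CutMomentMap

variable {X : Type*} {f : X → ℝ}

/-- The function `f̃` on the cut space `X × ℂ`. -/
noncomputable def cutMomentMap (f : X → ℝ) (p : X × ℂ) : ℝ := f p.1 - ‖p.2‖ ^ 2 / 2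

theorem continuous_cutMomentMap [TopologicalSpace X] (hf : Continuous f) :
    Continuous (cutMomentMap f) := by
  unfold cutMomentMap
  fun_prop

theorem cutMomentMap_le (hfle : ∀ x, f x ≤ 0) (p : X × ℂ) : cutMomentMap f p ≤ 0 := by
  unfold cutMomentMap
  linarith [hfle p.1, sq_nonneg ‖p.2‖]

theorem isCompact_cutMomentMap_preimage_Icc [TopologicalSpace X] (hf : Continuous f)
    (hfproper : ∀ K : Set ℝ, IsCompact K → IsCompact (f ⁻¹' K)) (hfle : ∀ x, f x ≤ 0)
    (a b : ℝ) : IsCompact (cutMomentMap f ⁻¹' Set.Icc a b) := by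
  refine IsCompact.of_isClosed_subset
    ((hfproper (Set.Icc a 0) isCompact_Icc).prod (isCompact_closedBall (0 : ℂ) √(-2 * a)))
    (isClosed_Icc.preimage (continuous_cutMomentMap hf)) ?_
  rintro ⟨x, z⟩ ⟨ha, -⟩
  simp only [cutMomentMap] at ha
  have hz : ‖z‖ ^ 2 ≤ -2 * a := by linarith [hfle x]
  refine ⟨⟨by linarith [sq_nonneg ‖z‖], hfle x⟩, ?_⟩
  simpa using Real.abs_le_sqrt hz

end CutMomentMap

section Cut

variable {X : Type*} [MulAction ℂˣ X] {n : ℕ} {h : X → Fin n → ℂ}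
  {d : Fin n → ℕ} {f : X → ℝ} {c : ℝ}

theorem mem_symplecticCutSubMulAction_iff
    {hhom : ∀ (t : ℂˣ) (x : X) (j : Fin n), h (t • x) j = (t : ℂ) ^ d j * h x j}
    {p : X × ℂ} : p ∈ symplecticCutSubMulAction h d hhom ↔ h p.1 ≠ 0 ∨ p.2 ≠ 0 := by
  change p ∈ ((h ⁻¹' {0}) ×ˢ ({0} : Set ℂ))ᶜ ↔ _
  simp only [Set.mem_compl_iff, Set.mem_prod, Set.mem_preimage, Set.mem_singleton_iff, not_and_or]

theorem cutMomentMap_preimage_subset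
    (hhom : ∀ (t : ℂˣ) (x : X) (j : Fin n), h (t • x) j = (t : ℂ) ^ d j * h x j)
    (hcf : ∀ x, h x = 0 → c < f x) :
    cutMomentMap f ⁻¹' {c} ⊆ symplecticCutSubMulAction h d hhom := by
  intro p hp
  rw [SetLike.mem_coe, mem_symplecticCutSubMulAction_iff, ← not_and_or]
  rintro ⟨hx, hz⟩
  simp only [Set.mem_preimage, Set.mem_singleton_iff, cutMomentMap, hz, norm_zero] at hp
  linarith [hcf p.1 hx]

theorem prodMap_smul_expUnit
    (hhom : ∀ (t : ℂˣ) (x : X) (j : Fin n), h (t • x) j = (t : ℂ) ^ d j * h x j)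
    (s : ℝ) (p : X × ℂ) :
    Prod.map h id (expUnit s • p) =
      (fun j => (expUnit s : ℂ) ^ d j * h p.1 j, (expUnit s : ℂ) ^ 1 * p.2) := by
  ext j
  · exact hhom _ _ j
  · simp [Units.smul_def]

theorem tendsto_prodMap_smul_expUnit_atBot
    (hhom : ∀ (t : ℂˣ) (x : X) (j : Fin n), h (t • x) j = (t : ℂ) ^ d j * h x j)
    (hd : ∀ j, 1 ≤ d j) (p : X × ℂ) :
    Tendsto (fun s => Prod.map h id (expUnit s • p)) atBot (𝓝 0) := by
  simp only [prodMap_smul_expUnit hhom]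
  exact (tendsto_pi_nhds.2 fun j =>
    tendsto_expUnit_pow_mul_atBot (Nat.one_le_iff_ne_zero.1 (hd j)) _).prodMk_nhds
      (tendsto_expUnit_pow_mul_atBot one_ne_zero _)

theorem eventually_lt_cutMomentMap_smul_expUnit_atBot [TopologicalSpace X]
    (hcont : Continuous h) (hproper : ∀ K : Set (Fin n → ℂ), IsCompact K → IsCompact (h ⁻¹' K))
    (hhom : ∀ (t : ℂˣ) (x : X) (j : Fin n), h (t • x) j = (t : ℂ) ^ d j * h x j)
    (hd : ∀ j, 1 ≤ d j) (hf : Continuous f) (hcf : ∀ x, h x = 0 → c < f x) (p : X × ℂ) :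
    ∀ᶠ s in atBot, c < cutMomentMap f (expUnit s • p) := by
  have hH : IsProperMap (Prod.map h id : X × ℂ → (Fin n → ℂ) × ℂ) :=
    (isProperMap_iff_isCompact_preimage.2 ⟨hcont, fun K hK => hproper K hK⟩).prodMap
      isProperMap_id
  have hfiber : ∀ q : X × ℂ, Prod.map h id q = 0 → c < cutMomentMap f q := by
    rintro ⟨x, z⟩ hq
    obtain ⟨hx, hz : z = 0⟩ := Prod.mk_eq_zero.1 hq
    simpa [cutMomentMap, hz] using hcf x hx
  filter_upwards [(tendsto_prodMap_smul_expUnit_atBot hhom hd p).eventually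
    (hH.eventually_nhds_forall_fiber_lt (continuous_cutMomentMap hf) hfiber)] with s hs
  exact hs _ rfl

theorem tendsto_smul_expUnit_atTop_cocompact [TopologicalSpace X] (hcont : Continuous h)
    (hhom : ∀ (t : ℂˣ) (x : X) (j : Fin n), h (t • x) j = (t : ℂ) ^ d j * h x j)
    (hd : ∀ j, 1 ≤ d j) {p : X × ℂ} (hp : p ∈ symplecticCutSubMulAction h d hhom) :
    Tendsto (fun s => expUnit s • p) atTop (cocompact (X × ℂ)) := by
  rcases mem_symplecticCutSubMulAction_iff.1 hp with hx | hz
  · obtain ⟨j, hj⟩ := Function.ne_iff.1 hx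
    refine Tendsto.of_tendsto_comp (g := fun q : X × ℂ => h q.1 j) ?_
      (comap_cocompact_le (by fun_prop))
    simpa [Function.comp_def, hhom] using
      tendsto_expUnit_pow_mul_atTop (Nat.one_le_iff_ne_zero.1 (hd j)) hj
  · refine Tendsto.of_tendsto_comp (g := Prod.snd) ?_ (comap_cocompact_le continuous_snd)
    simpa [Function.comp_def, Units.smul_def] using tendsto_expUnit_pow_mul_atTop one_ne_zero hz

theorem eventually_cutMomentMap_smul_expUnit_lt_atTop [TopologicalSpace X]
    (hcont : Continuous h)
    (hhom : ∀ (t : ℂˣ) (x : X) (j : Fin n), h (t • x) j = (t : ℂ) ^ d j * h x j)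
    (hd : ∀ j, 1 ≤ d j) (hf : Continuous f)
    (hfproper : ∀ K : Set ℝ, IsCompact K → IsCompact (f ⁻¹' K)) (hfle : ∀ x, f x ≤ 0)
    {p : X × ℂ} (hp : p ∈ symplecticCutSubMulAction h d hhom) :
    ∀ᶠ s in atTop, cutMomentMap f (expUnit s • p) < c := by
  filter_upwards [(tendsto_smul_expUnit_atTop_cocompact hcont hhom hd hp).eventually
    (isCompact_cutMomentMap_preimage_Icc hf hfproper hfle c 0).compl_mem_cocompact] with s hs
  exact lt_of_not_ge fun hc => hs ⟨hc, cutMomentMap_le hfle _⟩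

theorem exists_cutMomentMap_smul_expUnit_eq [TopologicalSpace X] [ContinuousSMul ℂˣ X]
    (hcont : Continuous h) (hproper : ∀ K : Set (Fin n → ℂ), IsCompact K → IsCompact (h ⁻¹' K))
    (hhom : ∀ (t : ℂˣ) (x : X) (j : Fin n), h (t • x) j = (t : ℂ) ^ d j * h x j)
    (hd : ∀ j, 1 ≤ d j) (hf : Continuous f)
    (hfproper : ∀ K : Set ℝ, IsCompact K → IsCompact (f ⁻¹' K)) (hfle : ∀ x, f x ≤ 0)
    (hcf : ∀ x, h x = 0 → c < f x) {p : X × ℂ} (hp : p ∈ symplecticCutSubMulAction h d hhom) :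
    ∃ s, cutMomentMap f (expUnit s • p) = c := by
  obtain ⟨s₀, hs₀⟩ :=
    (eventually_lt_cutMomentMap_smul_expUnit_atBot hcont hproper hhom hd hf hcf p).exists
  obtain ⟨s₁, hs₁⟩ :=
    (eventually_cutMomentMap_smul_expUnit_lt_atTop hcont hhom hd hf hfproper hfle hp).exists
  have hray : Continuous fun s => cutMomentMap f (expUnit s • p) :=
    (continuous_cutMomentMap hf).comp (continuous_expUnit.smul continuous_const)
  exact intermediate_value_univ s₁ s₀ hray ⟨hs₁.le, hs₀.le⟩

end Cut

theorem cut_orbit_space_compact_general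
    {X : Type*} [TopologicalSpace X]
    [MulAction ℂˣ X] [ContinuousSMul ℂˣ X]
    {n : ℕ} (h : X → Fin n → ℂ) (hcont : Continuous h)
    (hproper : ∀ K : Set (Fin n → ℂ), IsCompact K → IsCompact (h ⁻¹' K))
    (d : Fin n → ℕ) (hd : ∀ j, 1 ≤ d j)
    (hhom : ∀ (t : ℂˣ) (x : X) (j : Fin n), h (t • x) j = (t : ℂ) ^ d j * h x j)
    (f : X → ℝ) (hf : Continuous f)
    (hfproper : ∀ K : Set ℝ, IsCompact K → IsCompact (f ⁻¹' K))
    (hfle : ∀ x, f x ≤ 0) (c : ℝ)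
    (hcf : ∀ x, h x = 0 → c < f x) :
    CompactSpace
      (Quotient (MulAction.orbitRel ℂˣ (symplecticCutSubMulAction h d hhom))) := by
  have hslice : IsCompact (cutMomentMap f ⁻¹' {c}) := by
    simpa using isCompact_cutMomentMap_preimage_Icc hf hfproper hfle c c
  refine (symplecticCutSubMulAction h d hhom).compactSpace_quotient_orbitRel_of_isCompact hslice
    (cutMomentMap_preimage_subset hhom hcf) fun p hp => ?_
  obtain ⟨s, hs⟩ :=
    exists_cutMomentMap_smul_expUnit_eq hcont hproper hhom hd hf hfproper hfle hcf hp
  exact ⟨expUnit s, hs⟩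

set_option synthInstance.maxHeartbeats 1000000 in
/-- With `X` metrizable carrying a continuous `ℂˣ`-action, `h : X → ℂⁿ`
continuous, proper, homogeneous of degrees `d j ≥ 1`, `f : X → ℝ` continuous, proper and
nonpositive, and `c < 0` with `f x > c` whenever `h x = 0`: the orbit space `W/ℂˣ` of
`W = (X × ℂ) \ (h⁻¹(0) × {0})` (with the quotient topology) is compact. -/
theorem cut_orbit_space_compact
    {X : Type*} [TopologicalSpace X] [TopologicalSpace.MetrizableSpace X]
    [MulAction ℂˣ X] [ContinuousSMul ℂˣ X]
    {n : ℕ} (h : X → Fin n → ℂ) (hcont : Continuous h)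
    (hproper : ∀ K : Set (Fin n → ℂ), IsCompact K → IsCompact (h ⁻¹' K))
    (d : Fin n → ℕ) (hd : ∀ j, 1 ≤ d j)
    (hhom : ∀ (t : ℂˣ) (x : X) (j : Fin n), h (t • x) j = (t : ℂ) ^ d j * h x j)
    (f : X → ℝ) (hf : Continuous f)
    (hfproper : ∀ K : Set ℝ, IsCompact K → IsCompact (f ⁻¹' K))
    (hfle : ∀ x, f x ≤ 0) (c : ℝ) (hc : c < 0)
    (hcf : ∀ x, h x = 0 → c < f x) :
    CompactSpace
      (Quotient (MulAction.orbitRel ℂˣ (symplecticCutSubMulAction h d hhom))) :=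
  cut_orbit_space_compact_general h hcont hproper d hd hhom f hf hfproper hfle c hcf
end
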